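/- Let M be a finitely generated projective module over the Robba ring R_A with model M^{r₀}, and suppose R_A^{r₀}/t_LT ≅ ∏_{n≥n₁} R_A^{r₀}/(Q_n) by the Chinese remainder theorem on each closed annulus (the Q_n having disjoint zero sets). Then M^{r₀}/t_LT M^{r₀} ≅ ∏_{n≥n₁} M^{r₀}/Q_n M^{r₀}. -/
import Mathlib


variable {R : Type*} [CommRing R]

/-- The natural map `M/(t·M) → ∏ₙ M/(Qₙ·M)` when each `Qₙ` divides `t`. -/
def crtMap (M : Type*) [AddCommGroup M] [Module R M] (t : R) (Q : ℕ → R)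
    (hdvd : ∀ n, Q n ∣ t) :
    (M ⧸ (Ideal.span {t} • (⊤ : Submodule R M))) →ₗ[R]
      ∀ n, M ⧸ (Ideal.span {Q n} • (⊤ : Submodule R M)) :=
  LinearMap.pi fun n =>
    Submodule.mapQ _ _ LinearMap.id (by
      intro x hx
      rw [Submodule.comap_id]
      exact Submodule.smul_mono_left
        (Ideal.span_singleton_le_span_singleton.mpr (hdvd n)) hx)

lemma mem_span_singleton_smul_top {M : Type*} [AddCommGroup M] [Module R M] (a : R) (x : M) :
    x ∈ Ideal.span {a} • (⊤ : Submodule R M) ↔ ∃ y : M, a • y = x := by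
  constructor
  · intro h
    refine Submodule.smul_induction_on h ?_ ?_
    · intro r hr m _
      obtain ⟨c, rfl⟩ := Ideal.mem_span_singleton'.mp hr
      exact ⟨c • m, by rw [mul_comm, mul_smul]⟩
    · rintro _ _ ⟨y₁, rfl⟩ ⟨y₂, rfl⟩
      exact ⟨y₁ + y₂, by rw [smul_add]⟩
  · rintro ⟨y, rfl⟩
    exact Submodule.smul_mem_smul (Ideal.mem_span_singleton_self a) trivial

lemma crtMap_mk_apply {M : Type*} [AddCommGroup M] [Module R M] (t : R) (Q : ℕ → R)
    (hdvd : ∀ n, Q n ∣ t) (x : M) (n : ℕ) :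
    crtMap (R := R) M t Q hdvd (Submodule.Quotient.mk x) n = Submodule.Quotient.mk x := rfl

/-- If `R/(t) ≅ ∏ₙ R/(Qₙ)` (by the Chinese remainder theorem, the `Qₙ` having disjoint zero
sets), then for any finitely generated projective `R`-module `M` one has
`M/(t·M) ≅ ∏ₙ M/(Qₙ·M)`. -/
theorem crt_for_projective_modules (t : R) (Q : ℕ → R) (hdvd : ∀ n, Q n ∣ t)
    (hCRT : Function.Bijective (crtMap (R := R) R t Q hdvd))
    (M : Type*) [AddCommGroup M] [Module R M] [Module.Finite R M] [Module.Projective R M] :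
    Function.Bijective (crtMap (R := R) M t Q hdvd) := by
  obtain ⟨m, π, hπ⟩ := Module.Finite.exists_fin' R M
  obtain ⟨s, hs⟩ := Module.projective_lifting_property π (LinearMap.id) hπ
  have hsx : ∀ x : M, π (s x) = x := fun x => congrArg (· x) (congrArg DFunLike.coe hs)
  constructor
  · -- injectivity
    rw [injective_iff_map_eq_zero]
    intro z hz
    obtain ⟨x, rfl⟩ := Submodule.Quotient.mk_surjective _ z
    rw [Submodule.Quotient.mk_eq_zero]
    -- each component of s x is in span {t} • ⊤
    have hQn : ∀ n, ∃ y : M, Q n • y = x := by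
      intro n
      rw [← mem_span_singleton_smul_top]
      rw [← Submodule.Quotient.mk_eq_zero, ← crtMap_mk_apply (R := R) t Q hdvd x n, hz]
      rfl
    have hcomp : ∀ i : Fin m, s x i ∈ Ideal.span {t} • (⊤ : Submodule R R) := by
      intro i
      rw [← Submodule.Quotient.mk_eq_zero]
      have : crtMap (R := R) R t Q hdvd (Submodule.Quotient.mk (s x i)) = 0 := by
        funext n
        rw [crtMap_mk_apply, Pi.zero_apply]
        rw [Submodule.Quotient.mk_eq_zero, mem_span_singleton_smul_top]
        obtain ⟨y, hy⟩ := hQn n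
        exact ⟨s y i, by rw [← hy, map_smul]; rfl⟩
      exact hCRT.injective (by rw [this, map_zero])
    choose r hr using fun i => (mem_span_singleton_smul_top t (s x i)).mp (hcomp i)
    rw [mem_span_singleton_smul_top]
    refine ⟨π r, ?_⟩
    rw [← map_smul]
    rw [show t • r = s x from funext fun i => hr i, hsx]
  · -- surjectivity
    intro c
    -- choose representatives of c n
    choose cn hcn using fun n => Submodule.Quotient.mk_surjective _ (c n)
    -- for each coordinate i, use surjectivity of crtMap R
    have key : ∀ i : Fin m, ∃ a : R,
        ∀ n, a - s (cn n) i ∈ Ideal.span {Q n} • (⊤ : Submodule R R) := by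
      intro i
      obtain ⟨b, hb⟩ := hCRT.2 (fun n => Submodule.Quotient.mk (s (cn n) i))
      obtain ⟨a, rfl⟩ := Submodule.Quotient.mk_surjective _ b
      refine ⟨a, fun n => ?_⟩
      rw [← Submodule.Quotient.mk_eq_zero,
        Submodule.Quotient.mk_sub, sub_eq_zero, ← crtMap_mk_apply (R := R) t Q hdvd a n, hb]
    choose a ha using key
    choose w hw using fun i n => (mem_span_singleton_smul_top (Q n) _).mp (ha i n)
    refine ⟨Submodule.Quotient.mk (π a), ?_⟩
    funext n
    rw [crtMap_mk_apply, ← hcn n, Submodule.Quotient.eq]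
    rw [mem_span_singleton_smul_top]
    refine ⟨π (fun i => w i n), ?_⟩
    rw [← map_smul]
    have : Q n • (fun i => w i n) = a - s (cn n) := funext fun i => hw i n
    rw [this, map_sub, hsx]
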